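/- arXiv:1909.08206 — 2 statements merged into one kernel-verified Lean document; each statement's English description precedes it below -/
import Mathlib

section
/- Let g: ℝ² → ℝ∞ be defined by g(z₁,z₂) = z₁·z₂ if z₂ = log(z₁) and z₁ > 0, and +∞ otherwise. Then the lower semicontinuous convex hull of g is σ_log(z₁,z₂) = z₁ log(z₁) if z₁ > 0 and z₂ ≤ log(z₁), and +∞ otherwise. (Equivalently, the closed convex hull of the epigraph of g equals the epigraph of this function.) -/
/-! The epigraph of `σ_log` is closed, convex (by convexity of `exp` and of `x ↦ x log x`) and
contains the epigraph of `g`, which gives one inclusion. Conversely, a point below the graph of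
`log` differs from a point of `epi g` by a downward vertical vector, which is the limit of
vanishing convex combinations with points of `epi g` far out along the graph. -/

open Real Set Filter Topology

theorem Convex.add_mem_of_tendsto_smul_sub {E ι : Type*} [AddCommGroup E] [Module ℝ E]
    [TopologicalSpace E] [ContinuousAdd E] {C : Set E} (hconv : Convex ℝ C)
    (hclosed : IsClosed C) {l : Filter ι} [l.NeBot] {x d : E} {y : ι → E} {μ : ι → ℝ}
    (hx : x ∈ C) (hy : ∀ᶠ i in l, y i ∈ C) (hμ : ∀ᶠ i in l, μ i ∈ Icc 0 1)
    (hlim : Tendsto (fun i => μ i • (y i - x)) l (𝓝 d)) : x + d ∈ C :=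
  hclosed.mem_of_tendsto (tendsto_const_nhds.add hlim) <|
    (hy.and hμ).mono fun _ h => hconv.add_smul_sub_mem hx h.1 h.2

/-- The epigraph of `g`, with the graph of `log` written as `z₁ = exp z₂`. -/
def epigraphG : Set ((ℝ × ℝ) × ℝ) := {q | q.1.1 = exp q.1.2 ∧ q.1.1 * q.1.2 ≤ q.2}

/-- The epigraph of `σ_log`, with `0 < z₁ ∧ z₂ ≤ log z₁` written as `exp z₂ ≤ z₁`
so that the set is visibly closed. -/
def epigraphSigmaLog : Set ((ℝ × ℝ) × ℝ) :=
  {q | exp q.1.2 ≤ q.1.1 ∧ q.1.1 * log q.1.1 ≤ q.2}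

lemma eq_exp_iff_pos_and_eq_log {z₁ z₂ : ℝ} : z₁ = exp z₂ ↔ 0 < z₁ ∧ z₂ = log z₁ :=
  ⟨fun h => ⟨h ▸ exp_pos z₂, by rw [h, log_exp]⟩, fun h => by rw [h.2, exp_log h.1]⟩

lemma exp_le_iff_pos_and_le_log {z₁ z₂ : ℝ} : exp z₂ ≤ z₁ ↔ 0 < z₁ ∧ z₂ ≤ log z₁ :=
  ⟨fun h => ⟨(exp_pos z₂).trans_le h, (le_log_iff_exp_le ((exp_pos z₂).trans_le h)).2 h⟩,
    fun h => (le_log_iff_exp_le h.1).1 h.2⟩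

lemma epigraphG_subset_epigraphSigmaLog : epigraphG ⊆ epigraphSigmaLog := by
  rintro q ⟨hq, ht⟩
  refine ⟨hq.ge, ?_⟩
  rwa [hq, log_exp, ← hq]

lemma convex_epigraphSigmaLog : Convex ℝ epigraphSigmaLog := by
  rintro ⟨⟨x₁, x₂⟩, s⟩ ⟨hx, hs⟩ ⟨⟨y₁, y₂⟩, t⟩ ⟨hy, ht⟩ a b ha hb hab
  simp only [Prod.smul_mk, Prod.mk_add_mk, smul_eq_mul]
  constructor
  · calc exp (a * x₂ + b * y₂) ≤ a * exp x₂ + b * exp y₂ :=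
          convexOn_exp.2 (mem_univ _) (mem_univ _) ha hb hab
      _ ≤ a * x₁ + b * y₁ := by gcongr
  · calc (a * x₁ + b * y₁) * log (a * x₁ + b * y₁) ≤ a * (x₁ * log x₁) + b * (y₁ * log y₁) :=
          convexOn_mul_log.2 ((exp_pos x₂).trans_le hx).le ((exp_pos y₂).trans_le hy).le ha hb hab
      _ ≤ a * s + b * t := by gcongr

lemma isClosed_epigraphSigmaLog : IsClosed epigraphSigmaLog :=
  (isClosed_le (f := fun q : (ℝ × ℝ) × ℝ => exp q.1.2) (by fun_prop) (by fun_prop)).inter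
    (isClosed_le (f := fun q : (ℝ × ℝ) × ℝ => q.1.1 * log q.1.1)
      (continuous_mul_log.comp (by fun_prop)) (by fun_prop))

/-- `(z₁, z₂, t) = (z₁, log z₁, t) + (0, -c, 0)`, and `(0, -c, 0)` is the limit of
`(c / s) • (y s - (z₁, log z₁, t))` for the graph points `y s = (exp (-s), -s, -s exp (-s))`. -/
lemma epigraphSigmaLog_subset_closure_convexHull :
    epigraphSigmaLog ⊆ closure (convexHull ℝ epigraphG) := by
  rintro ⟨⟨z₁, z₂⟩, t⟩ ⟨hexp, ht⟩
  obtain ⟨hz₁, hz₂⟩ := exp_le_iff_pos_and_le_log.1 hexp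
  set c := log z₁ - z₂
  have hc : 0 ≤ c := sub_nonneg.2 hz₂
  have hsplit : ((z₁, z₂), t) = ((z₁, log z₁), t) + ((0, -c), (0 : ℝ)) := by
    simp only [Prod.mk_add_mk, c]; ring_nf
  have hmem : ∀ q ∈ epigraphG, q ∈ closure (convexHull ℝ epigraphG) :=
    fun q hq => subset_closure (subset_convexHull ℝ _ hq)
  have hcs : Tendsto (fun s : ℝ => c / s) atTop (𝓝 0) := tendsto_const_nhds.div_atTop tendsto_id
  have hexp0 : Tendsto (fun s : ℝ => exp (-s)) atTop (𝓝 0) := tendsto_exp_neg_atTop_nhds_zero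
  have hsexp : Tendsto (fun s : ℝ => exp (-s) * -s) atTop (𝓝 0) := by
    simpa [mul_comm] using (tendsto_pow_mul_exp_neg_atTop_nhds_zero 1).neg
  rw [hsplit]
  refine (convex_convexHull ℝ _).closure.add_mem_of_tendsto_smul_sub isClosed_closure (l := atTop)
    (y := fun s : ℝ => ((exp (-s), -s), exp (-s) * -s)) (μ := fun s => c / s)
    (hmem _ ⟨(exp_log hz₁).symm, ht⟩) (Eventually.of_forall fun s => hmem _ ⟨rfl, le_rfl⟩) ?_ ?_
  · filter_upwards [eventually_ge_atTop (max c 1)] with s hs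
    have hs₀ : 0 < s := one_pos.trans_le (le_of_max_le_right hs)
    exact ⟨div_nonneg hc hs₀.le, div_le_one_of_le₀ (le_of_max_le_left hs) hs₀.le⟩
  simp only [Prod.mk_sub_mk, Prod.smul_mk, smul_eq_mul]
  refine (Tendsto.prodMk_nhds (Tendsto.prodMk_nhds ?_ ?_) ?_)
  · simpa using hcs.mul (hexp0.sub_const z₁)
  · refine Tendsto.congr' ?_ (by simpa using tendsto_const_nhds.sub (hcs.mul_const (log z₁)))
    filter_upwards [eventually_ne_atTop 0] with s hs
    field_simp
  · simpa using hcs.mul (hsexp.sub_const t)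

lemma setOf_le_eq_epigraphG {g : ℝ × ℝ → EReal}
    (hg_on : ∀ p : ℝ × ℝ, 0 < p.1 → p.2 = log p.1 → g p = ((p.1 * p.2 : ℝ) : EReal))
    (hg_off : ∀ p : ℝ × ℝ, ¬(0 < p.1 ∧ p.2 = log p.1) → g p = ⊤) :
    {q : (ℝ × ℝ) × ℝ | g q.1 ≤ (q.2 : EReal)} = epigraphG := by
  ext ⟨p, t⟩
  simp only [mem_ofPred_eq, epigraphG, eq_exp_iff_pos_and_eq_log]
  by_cases h : 0 < p.1 ∧ p.2 = log p.1
  · rw [hg_on p h.1 h.2, EReal.coe_le_coe_iff, h.2]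
    simp [h]
  · simp [hg_off p h, h]

lemma setOf_le_eq_epigraphSigmaLog {σ : ℝ × ℝ → EReal}
    (hσ_on : ∀ p : ℝ × ℝ, 0 < p.1 → p.2 ≤ log p.1 → σ p = ((p.1 * log p.1 : ℝ) : EReal))
    (hσ_off : ∀ p : ℝ × ℝ, ¬(0 < p.1 ∧ p.2 ≤ log p.1) → σ p = ⊤) :
    {q : (ℝ × ℝ) × ℝ | σ q.1 ≤ (q.2 : EReal)} = epigraphSigmaLog := by
  ext ⟨p, t⟩
  simp only [mem_ofPred_eq, epigraphSigmaLog, exp_le_iff_pos_and_le_log]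
  by_cases h : 0 < p.1 ∧ p.2 ≤ log p.1
  · rw [hσ_on p h.1 h.2, EReal.coe_le_coe_iff]
    simp [h]
  · simp [hσ_off p h, h]

/-- Let `g(z₁,z₂) = z₁·z₂` if `z₂ = log z₁` with `z₁ > 0`, and `+∞` otherwise.
Then the lsc convex hull of `g` is `σ_log(z₁,z₂) = z₁ log z₁` if `z₁ > 0` and
`z₂ ≤ log z₁`, and `+∞` otherwise; equivalently the closed convex hull of the
epigraph of `g` equals the epigraph of this function. -/
theorem stmt_3 (g σ : ℝ × ℝ → EReal)
    (hg_on : ∀ p : ℝ × ℝ, 0 < p.1 → p.2 = Real.log p.1 → g p = ((p.1 * p.2 : ℝ) : EReal))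
    (hg_off : ∀ p : ℝ × ℝ, ¬(0 < p.1 ∧ p.2 = Real.log p.1) → g p = ⊤)
    (hσ_on : ∀ p : ℝ × ℝ, 0 < p.1 → p.2 ≤ Real.log p.1 →
      σ p = ((p.1 * Real.log p.1 : ℝ) : EReal))
    (hσ_off : ∀ p : ℝ × ℝ, ¬(0 < p.1 ∧ p.2 ≤ Real.log p.1) → σ p = ⊤) :
    closure (convexHull ℝ {q : (ℝ × ℝ) × ℝ | g q.1 ≤ (q.2 : EReal)})
      = {q : (ℝ × ℝ) × ℝ | σ q.1 ≤ (q.2 : EReal)} := by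
  rw [setOf_le_eq_epigraphG hg_on hg_off, setOf_le_eq_epigraphSigmaLog hσ_on hσ_off]
  refine (closure_minimal ?_ isClosed_epigraphSigmaLog).antisymm
    epigraphSigmaLog_subset_closure_convexHull
  exact convexHull_min epigraphG_subset_epigraphSigmaLog convex_epigraphSigmaLog
end

section
/- Let (xₙ), (yₙ), (zₙ) be sequences in a real Hilbert (or normed) space X with ‖xₙ‖ → ∞. Suppose that for every subsequence (y_{kₙ}) with ‖y_{kₙ}‖ → ∞ we have ‖z_{kₙ}‖²/‖y_{kₙ}‖ → ∞. Then (‖xₙ − yₙ‖² + ‖zₙ‖²)/‖xₙ‖ → ∞ as n → ∞. -/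
/-!
Argue by contradiction: along some subsequence the quotient stays below a constant `C`. There
`‖xₙ - yₙ‖² < C ‖xₙ‖`, so `‖xₙ - yₙ‖ = o(‖xₙ‖)` and `‖yₙ‖ ≥ ‖xₙ‖ / 2` eventually; hence
`‖yₙ‖ → ∞` along the subsequence, while `‖zₙ‖² / ‖yₙ‖ ≤ 2 ‖zₙ‖² / ‖xₙ‖ < 2C`, contradicting the
hypothesis on `z`.
-/

open Filter

section

variable {E : Type*} [SeminormedAddCommGroup E]

lemma half_norm_le_norm_of_sq_norm_sub_lt {a b : E} {C : ℝ}
    (hab : ‖a - b‖ ^ 2 < C * ‖a‖) (hC : 4 * C ≤ ‖a‖) : ‖a‖ / 2 ≤ ‖b‖ := by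
  have hsub : ‖a - b‖ < ‖a‖ / 2 := by nlinarith [norm_nonneg (a - b), norm_nonneg a]
  linarith [norm_sub_norm_le a b]

lemma half_norm_le_norm_and_sq_norm_div_lt {a b c : E} {C : ℝ} (ha : 0 < ‖a‖)
    (hC : 4 * C ≤ ‖a‖) (h : (‖a - b‖ ^ 2 + ‖c‖ ^ 2) / ‖a‖ < C) :
    ‖a‖ / 2 ≤ ‖b‖ ∧ ‖c‖ ^ 2 / ‖b‖ < 2 * C := by
  have hsum : ‖a - b‖ ^ 2 + ‖c‖ ^ 2 < C * ‖a‖ := (div_lt_iff₀ ha).1 h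
  have hb : ‖a‖ / 2 ≤ ‖b‖ :=
    half_norm_le_norm_of_sq_norm_sub_lt (by nlinarith [sq_nonneg ‖c‖]) hC
  refine ⟨hb, ?_⟩
  calc ‖c‖ ^ 2 / ‖b‖ ≤ ‖c‖ ^ 2 / (‖a‖ / 2) :=
        div_le_div_of_nonneg_left (sq_nonneg _) (half_pos ha) hb
    _ < 2 * C := by
        rw [div_lt_iff₀ (half_pos ha)]
        nlinarith [sq_nonneg ‖a - b‖]

end

theorem stmt_12_general {X : Type*} [NormedAddCommGroup X]
    (x y z : ℕ → X)
    (hx : Filter.Tendsto (fun n => ‖x n‖) Filter.atTop Filter.atTop)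
    (hyz : ∀ k : ℕ → ℕ, StrictMono k →
      Filter.Tendsto (fun n => ‖y (k n)‖) Filter.atTop Filter.atTop →
      Filter.Tendsto (fun n => ‖z (k n)‖ ^ 2 / ‖y (k n)‖) Filter.atTop Filter.atTop) :
    Filter.Tendsto (fun n => (‖x n - y n‖ ^ 2 + ‖z n‖ ^ 2) / ‖x n‖)
      Filter.atTop Filter.atTop := by
  by_contra hdiv
  simp only [tendsto_atTop, not_forall, not_eventually, not_le] at hdiv
  obtain ⟨C, hC⟩ := hdiv
  obtain ⟨φ, hφ, hφC⟩ := extraction_of_frequently_atTop hC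
  have hxφ : Tendsto (fun n => ‖x (φ n)‖) atTop atTop := hx.comp hφ.tendsto_atTop
  have hbounds : ∀ᶠ n in atTop,
      ‖x (φ n)‖ / 2 ≤ ‖y (φ n)‖ ∧ ‖z (φ n)‖ ^ 2 / ‖y (φ n)‖ < 2 * C := by
    filter_upwards [hxφ.eventually_gt_atTop 0, hxφ.eventually_ge_atTop (4 * C)] with n hpos hbig
    exact half_norm_le_norm_and_sq_norm_div_lt hpos hbig (hφC n)
  have hyφ : Tendsto (fun n => ‖y (φ n)‖) atTop atTop :=
    tendsto_atTop_mono' _ (hbounds.mono fun _ h => h.1) (hxφ.atTop_div_const two_pos)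
  obtain ⟨n, hge, -, hlt⟩ :=
    (((hyz φ hφ hyφ).eventually_ge_atTop (2 * C)).and hbounds).exists
  exact hlt.not_ge hge

/-- Let `(xₙ)`, `(yₙ)`, `(zₙ)` be sequences in a real inner product space with
`‖xₙ‖ → ∞`. If every subsequence `(y_{kₙ})` with `‖y_{kₙ}‖ → ∞` satisfies
`‖z_{kₙ}‖²/‖y_{kₙ}‖ → ∞`, then `(‖xₙ − yₙ‖² + ‖zₙ‖²)/‖xₙ‖ → ∞`. -/
theorem stmt_12 {X : Type*} [NormedAddCommGroup X] [InnerProductSpace ℝ X]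
    (x y z : ℕ → X)
    (hx : Filter.Tendsto (fun n => ‖x n‖) Filter.atTop Filter.atTop)
    (hyz : ∀ k : ℕ → ℕ, StrictMono k →
      Filter.Tendsto (fun n => ‖y (k n)‖) Filter.atTop Filter.atTop →
      Filter.Tendsto (fun n => ‖z (k n)‖ ^ 2 / ‖y (k n)‖) Filter.atTop Filter.atTop) :
    Filter.Tendsto (fun n => (‖x n - y n‖ ^ 2 + ‖z n‖ ^ 2) / ‖x n‖)
      Filter.atTop Filter.atTop :=
  stmt_12_general x y z hx hyz
end
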